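/- If a Gaussian cubature formula of degree 2m−1 for μ exists, with moment sequence z of the node measure ν = Σ_k γ_k δ_{x(k)}, then the vector u = L_z(𝒫_{2m}) ∈ ℝ^{r_{2m}} solves the linear system A⁰ + A^{(2m)} u = 0. -/

import Mathlib

open MeasureTheory MvPolynomial

noncomputable section

/-- Total degree of a multi-index. -/
def mdeg {n : ℕ} (α : Fin n →₀ ℕ) : ℕ := α.sum fun _ k => k

/-- The strict graded lexicographic order on multi-indices. -/
def glt {n : ℕ} (α β : Fin n →₀ ℕ) : Prop :=
  mdeg α < mdeg β ∨ (mdeg α = mdeg β ∧ toLex β < toLex α)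

/-!
A Gaussian cubature has `N = dim Π_{m-1}` nodes and the evaluation map `Π_{m-1} → ℝ^N` is injective
(a polynomial `q` vanishing at the nodes has `∫ q² = Σ_k w_k q(x_k)² = 0`), hence bijective, so
every node `x_j` has a Lagrange polynomial `ℓ_j ∈ Π_{m-1}`, and `w_j P_α(x_j) = ∫ P_α ℓ_j = 0`
for `|α| = m`: the nodes are common zeros of the orthonormal polynomials of degree `m`
(Mysovskikh). Now expand `P_γ P_β = Σ_{|κ| ≤ 2m} a_κ P_κ` with `a_κ = ∫ P_γ P_β P_κ`. The part of
degree `≤ 2m - 1` is integrated exactly by the cubature and has the same integral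
`∫ P_γ P_β = δ_{γβ}`, so applying the cubature sum to both sides gives
`0 = δ_{γβ} + Σ_{|κ| = 2m} a_κ Σ_k w_k P_κ(x_k)`.
-/

def degLE (n d : ℕ) : Finset (Fin n →₀ ℕ) :=
  (Finset.range (d + 1)).biUnion fun k => Finset.univ.finsuppAntidiag k

lemma mdeg_eq_sum {n : ℕ} (α : Fin n →₀ ℕ) : mdeg α = ∑ i, α i :=
  Finsupp.sum_fintype α _ fun _ => rfl

lemma mem_degLE {n d : ℕ} {α : Fin n →₀ ℕ} : α ∈ degLE n d ↔ mdeg α ≤ d := by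
  simp [degLE, mdeg_eq_sum]

lemma card_degLE (n d : ℕ) : (degLE n d).card = (n + d).choose n := by
  have hdisj : Set.PairwiseDisjoint (Finset.range (d + 1) : Set ℕ)
      fun k => (Finset.univ : Finset (Fin n)).finsuppAntidiag k := by
    intro i _ j _ hij
    simp only [Function.onFun, Finset.disjoint_left, Finset.mem_finsuppAntidiag]
    rintro α ⟨rfl, -⟩ ⟨h, -⟩
    exact hij h
  rw [degLE, Finset.card_biUnion hdisj]
  simp only [Finset.card_finsuppAntidiag_nat_eq_multichoose, Finset.card_univ, Fintype.card_fin]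
  rw [Nat.sum_range_multichoose, add_comm]

lemma finrank_restrictTotalDegree (R : Type*) [CommRing R] [StrongRankCondition R] (n d : ℕ) :
    Module.finrank R (restrictTotalDegree (Fin n) R d) = (n + d).choose n := by
  have hset : {s : Fin n →₀ ℕ | (s.sum fun _ e => e) ≤ d} = ↑(degLE n d) := by
    ext α; exact mem_degLE.symm
  rw [restrictTotalDegree, Module.finrank_eq_nat_card_basis (basisRestrictSupport R _), hset,
    Nat.card_coe_set_eq, Set.ncard_coe_finset, card_degLE]

def PolynomialsIntegrable {n : ℕ} (μ : Measure (Fin n → ℝ)) : Prop :=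
  ∀ f : MvPolynomial (Fin n) ℝ, Integrable (fun x => eval x f) μ

def OrthonormalPolynomials {n : ℕ} (μ : Measure (Fin n → ℝ))
    (P : (Fin n →₀ ℕ) → MvPolynomial (Fin n) ℝ) : Prop :=
  ∀ α β : Fin n →₀ ℕ, ∫ x, eval x (P α) * eval x (P β) ∂μ = if α = β then 1 else 0

section Orthonormal

variable {n : ℕ} {μ : Measure (Fin n → ℝ)} {P : (Fin n →₀ ℕ) → MvPolynomial (Fin n) ℝ}

lemma totalDegree_le_mdeg (hspan : ∀ α : Fin n →₀ ℕ, ∀ β ∈ (P α).support, β = α ∨ glt β α)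
    (α : Fin n →₀ ℕ) : (P α).totalDegree ≤ mdeg α := by
  refine Finset.sup_le fun β hβ => ?_
  rcases hspan α β hβ with rfl | h | ⟨h, -⟩
  exacts [le_rfl, h.le, h.le]

lemma integral_eval_sum_smul_mul (hint : PolynomialsIntegrable μ)
    (horth : OrthonormalPolynomials μ P) (S : Finset (Fin n →₀ ℕ)) (c : (Fin n →₀ ℕ) → ℝ)
    (β : Fin n →₀ ℕ) :
    ∫ t, eval t (∑ α ∈ S, c α • P α) * eval t (P β) ∂μ = if β ∈ S then c β else 0 := by
  have hint₂ : ∀ α, Integrable (fun t => c α * (eval t (P α) * eval t (P β))) μ := fun α =>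
    (by simpa using hint (P α * P β) : Integrable _ μ).const_mul (c α)
  simp only [map_sum, smul_eval, Finset.sum_mul, mul_assoc]
  rw [integral_finsetSum _ fun α _ => hint₂ α]
  simp only [integral_const_mul, (horth · β), mul_ite, mul_one, mul_zero, Finset.sum_ite_eq']

lemma linearIndepOn_of_orthonormal (hint : PolynomialsIntegrable μ)
    (horth : OrthonormalPolynomials μ P) (S : Finset (Fin n →₀ ℕ)) :
    LinearIndepOn ℝ P (S : Set (Fin n →₀ ℕ)) :=
  linearIndepOn_finset_iff.mpr fun c hc β hβ => by
    simpa [hc, hβ] using (integral_eval_sum_smul_mul hint horth S c β).symm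

lemma span_image_degLE (hint : PolynomialsIntegrable μ) (horth : OrthonormalPolynomials μ P)
    (hdeg : ∀ α, (P α).totalDegree ≤ mdeg α) (d : ℕ) :
    Submodule.span ℝ (P '' degLE n d) = restrictTotalDegree (Fin n) ℝ d := by
  refine Submodule.eq_of_le_of_finrank_eq ?_ ?_
  · refine Submodule.span_le.mpr ?_
    rintro _ ⟨α, hα, rfl⟩
    exact (mem_restrictTotalDegree _ _ _).mpr ((hdeg α).trans (mem_degLE.mp hα))
  · rw [Set.image_eq_range, finrank_span_eq_card (linearIndepOn_of_orthonormal hint horth _),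
      finrank_restrictTotalDegree]
    simpa using card_degLE n d

theorem eq_sum_integral_mul_smul (hint : PolynomialsIntegrable μ)
    (horth : OrthonormalPolynomials μ P) (hdeg : ∀ α, (P α).totalDegree ≤ mdeg α) {d : ℕ}
    {f : MvPolynomial (Fin n) ℝ} (hf : f.totalDegree ≤ d) :
    f = ∑ α ∈ degLE n d, (∫ t, eval t f * eval t (P α) ∂μ) • P α := by
  have hmem : f ∈ Submodule.span ℝ (P '' degLE n d) := by
    rw [span_image_degLE hint horth hdeg]
    exact (mem_restrictTotalDegree _ _ _).mpr hf
  obtain ⟨l, hl, rfl⟩ := (Finsupp.mem_span_image_iff_linearCombination ℝ).mp hmem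
  rw [Finsupp.linearCombination_apply,
    Finsupp.sum_of_support_subset l ((Finsupp.mem_supported _ _).mp hl) (fun α a => a • P α)
      fun _ _ => zero_smul _ _]
  refine Finset.sum_congr rfl fun α hα => ?_
  rw [integral_eval_sum_smul_mul hint horth, if_pos hα]

lemma integral_mul_eval_eq_zero_of_totalDegree_lt (hint : PolynomialsIntegrable μ)
    (horth : OrthonormalPolynomials μ P) (hdeg : ∀ α, (P α).totalDegree ≤ mdeg α)
    {q : MvPolynomial (Fin n) ℝ} {a : Fin n →₀ ℕ} (hq : q.totalDegree < mdeg a) :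
    ∫ t, eval t q * eval t (P a) ∂μ = 0 := by
  rw [eq_sum_integral_mul_smul (f := q) hint horth hdeg le_rfl, integral_eval_sum_smul_mul hint horth,
    if_neg (mem_degLE.not.mpr hq.not_ge)]

lemma exists_P_zero_eq_C (horth : OrthonormalPolynomials μ P)
    (hdeg : ∀ α, (P α).totalDegree ≤ mdeg α) : ∃ c : ℝ, c ≠ 0 ∧ P 0 = C c := by
  have hP₀ : P 0 = C (coeff 0 (P 0)) :=
    totalDegree_eq_zero_iff_eq_C.mp (Nat.le_zero.mp (hdeg 0))
  refine ⟨coeff 0 (P 0), fun h => ?_, hP₀⟩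
  have h00 := horth 0 0
  rw [hP₀, h] at h00
  simp at h00

end Orthonormal

def IsCubature {n : ℕ} {ι : Type*} [Fintype ι] (μ : Measure (Fin n → ℝ)) (w : ι → ℝ)
    (x : ι → Fin n → ℝ) (d : ℕ) : Prop :=
  ∀ f : MvPolynomial (Fin n) ℝ, f.totalDegree ≤ d → ∑ k, w k * eval (x k) f = ∫ t, eval t f ∂μ

namespace IsCubature

variable {n : ℕ} {μ : Measure (Fin n → ℝ)} {P : (Fin n →₀ ℕ) → MvPolynomial (Fin n) ℝ}
  {ι : Type*} [Fintype ι] {w : ι → ℝ} {x : ι → Fin n → ℝ} {d : ℕ}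

lemma mono {e : ℕ} (hcub : IsCubature μ w x d) (hed : e ≤ d) : IsCubature μ w x e :=
  fun f hf => hcub f (hf.trans hed)

lemma eq_zero_of_eval_eq_zero
    (hpd : ∀ f : MvPolynomial (Fin n) ℝ, f ≠ 0 → 0 < ∫ x, (eval x f) ^ 2 ∂μ)
    (hcub : IsCubature μ w x (2 * d)) {q : MvPolynomial (Fin n) ℝ} (hq : q.totalDegree ≤ d)
    (hzero : ∀ k, eval (x k) q = 0) : q = 0 := by
  by_contra hne
  have hsq := hcub (q ^ 2) ((totalDegree_pow q 2).trans (by omega))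
  simp only [map_pow, hzero, ne_eq, OfNat.ofNat_ne_zero, not_false_eq_true, zero_pow, mul_zero,
    Finset.sum_const_zero] at hsq
  exact (hpd q hne).ne hsq

lemma exists_interpolant
    (hpd : ∀ f : MvPolynomial (Fin n) ℝ, f ≠ 0 → 0 < ∫ x, (eval x f) ^ 2 ∂μ)
    (hcub : IsCubature μ w x (2 * d)) (hcard : Fintype.card ι = (n + d).choose n)
    (v : ι → ℝ) : ∃ q : MvPolynomial (Fin n) ℝ, q.totalDegree ≤ d ∧ ∀ k, eval (x k) q = v k := by
  let ev : restrictTotalDegree (Fin n) ℝ d →ₗ[ℝ] ι → ℝ :=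
    LinearMap.pi (fun k => (aeval (x k)).toLinearMap) ∘ₗ (restrictTotalDegree (Fin n) ℝ d).subtype
  have hinj : Function.Injective ev := by
    refine (injective_iff_map_eq_zero ev).mpr fun q hq => Subtype.ext ?_
    exact hcub.eq_zero_of_eval_eq_zero hpd ((mem_restrictTotalDegree _ _ _).mp q.2)
      fun k => congrFun hq k
  have hdim : Module.finrank ℝ (restrictTotalDegree (Fin n) ℝ d) = Module.finrank ℝ (ι → ℝ) := by
    rw [finrank_restrictTotalDegree, Module.finrank_fintype_fun_eq_card, hcard]
  obtain ⟨q, hq⟩ := (LinearMap.injective_iff_surjective_of_finrank_eq_finrank hdim).mp hinj v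
  exact ⟨q, (mem_restrictTotalDegree _ _ _).mp q.2, fun k => congrFun hq k⟩

theorem eval_eq_zero (hint : PolynomialsIntegrable μ)
    (hpd : ∀ f : MvPolynomial (Fin n) ℝ, f ≠ 0 → 0 < ∫ x, (eval x f) ^ 2 ∂μ)
    (horth : OrthonormalPolynomials μ P) (hdeg : ∀ α, (P α).totalDegree ≤ mdeg α)
    {m : ℕ} (hm : 1 ≤ m) (hcub : IsCubature μ w x (2 * m - 1))
    (hcard : Fintype.card ι = (n + m - 1).choose n) (hw : ∀ k, w k ≠ 0)
    {a : Fin n →₀ ℕ} (ha : mdeg a = m) (j : ι) : eval (x j) (P a) = 0 := by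
  classical
  obtain ⟨ℓ, hℓ, hℓx⟩ := (hcub.mono (e := 2 * (m - 1)) (by omega)).exists_interpolant
    hpd (by rw [hcard, Nat.add_sub_assoc hm]) (Pi.single j 1)
  have hnodes : ∑ k, w k * eval (x k) (P a * ℓ) = w j * eval (x j) (P a) := by
    simp [hℓx, Pi.single_apply]
  have horth_ℓ : ∫ t, eval t (P a * ℓ) ∂μ = 0 := by
    simp_rw [map_mul, mul_comm (eval _ (P a))]
    exact integral_mul_eval_eq_zero_of_totalDegree_lt hint horth hdeg (by omega)
  have hexact := hcub (P a * ℓ) ((totalDegree_mul _ _).trans (by have := hdeg a; omega))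
  rw [hnodes, horth_ℓ] at hexact
  exact (mul_eq_zero.mp hexact).resolve_left (hw j)

theorem sum_eq_integral_add (hint : PolynomialsIntegrable μ) (horth : OrthonormalPolynomials μ P)
    (hdeg : ∀ α, (P α).totalDegree ≤ mdeg α) {D : ℕ} (hD : 1 ≤ D)
    (hcub : IsCubature μ w x (D - 1)) (K : Finset (Fin n →₀ ℕ))
    (hK : ∀ κ : Fin n →₀ ℕ, κ ∈ K ↔ mdeg κ = D) {f : MvPolynomial (Fin n) ℝ}
    (hf : f.totalDegree ≤ D) :
    ∑ k, w k * eval (x k) f = ∫ t, eval t f ∂μ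
      + ∑ κ ∈ K, (∫ t, eval t f * eval t (P κ) ∂μ) * ∑ k, w k * eval (x k) (P κ) := by
  set c := fun α => ∫ t, eval t f * eval t (P α) ∂μ
  set g := ∑ α ∈ degLE n (D - 1), c α • P α
  have hdisj : Disjoint (degLE n (D - 1)) K :=
    Finset.disjoint_left.mpr fun α hα hαK => by
      have := mem_degLE.mp hα; have := (hK α).mp hαK; omega
  have hunion : degLE n D = degLE n (D - 1) ∪ K := by
    ext α; simp only [Finset.mem_union, mem_degLE, hK]; omega
  have hfg : f = g + ∑ κ ∈ K, c κ • P κ := by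
    rw [← Finset.sum_union hdisj, ← hunion]
    exact eq_sum_integral_mul_smul hint horth hdeg hf
  have hg_deg : g.totalDegree ≤ D - 1 :=
    (totalDegree_finsetSum _ _).trans <| Finset.sup_le fun α hα =>
      (totalDegree_smul_le _ _).trans ((hdeg α).trans (mem_degLE.mp hα))
  -- `g` and `f` have the same coefficient on the nonzero constant `P 0`, hence the same integral.
  have hg_int : ∫ t, eval t g ∂μ = ∫ t, eval t f ∂μ := by
    obtain ⟨c₀, hc₀, hP₀⟩ := exists_P_zero_eq_C horth hdeg
    have h0 := integral_eval_sum_smul_mul hint horth (degLE n (D - 1)) c 0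
    rw [if_pos (mem_degLE.mpr (Nat.zero_le _))] at h0
    simp only [c, hP₀, eval_C, integral_mul_const] at h0
    exact mul_right_cancel₀ hc₀ h0
  calc ∑ k, w k * eval (x k) f
      = ∑ k, w k * eval (x k) g + ∑ κ ∈ K, c κ * ∑ k, w k * eval (x k) (P κ) := by
        conv_lhs => rw [hfg]
        simp only [map_add, map_sum, smul_eval, mul_add, Finset.sum_add_distrib, Finset.mul_sum]
        rw [Finset.sum_comm (s := Finset.univ)]
        simp only [mul_left_comm]
    _ = _ := by rw [hcub g hg_deg, hg_int]

end IsCubature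

theorem stmt_13_general (n m : ℕ) (hm : 1 ≤ m)
    (μ : Measure (Fin n → ℝ))
    (hint : ∀ f : MvPolynomial (Fin n) ℝ, Integrable (fun x => eval x f) μ)
    (hpd : ∀ f : MvPolynomial (Fin n) ℝ, f ≠ 0 → 0 < ∫ x, (eval x f) ^ 2 ∂μ)
    (P : (Fin n →₀ ℕ) → MvPolynomial (Fin n) ℝ)
    (hspan : ∀ α : Fin n →₀ ℕ, ∀ β ∈ (P α).support, β = α ∨ glt β α)
    (horth : ∀ α β : Fin n →₀ ℕ,
      ∫ x, eval x (P α) * eval x (P β) ∂μ = if α = β then 1 else 0)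
    (K : Finset (Fin n →₀ ℕ)) (hK : ∀ κ : Fin n →₀ ℕ, κ ∈ K ↔ mdeg κ = 2 * m)
    (x : Fin (Nat.choose (n + m - 1) n) → (Fin n → ℝ))
    (w : Fin (Nat.choose (n + m - 1) n) → ℝ)
    (hw : ∀ k, 0 < w k)
    (hcub : ∀ f : MvPolynomial (Fin n) ℝ, f.totalDegree ≤ 2 * m - 1 →
      ∑ k, w k * eval (x k) f = ∫ t, eval t f ∂μ) :
    ∀ γ β : Fin n →₀ ℕ, mdeg γ = m → mdeg β = m →
      (if γ = β then (1 : ℝ) else 0)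
        + ∑ κ ∈ K, (∫ t, eval t (P γ) * eval t (P β) * eval t (P κ) ∂μ)
            * (∑ k, w k * eval (x k) (P κ)) = 0 := by
  intro γ β hγ hβ
  have hcub : IsCubature μ w x (2 * m - 1) := hcub
  have hdeg := totalDegree_le_mdeg hspan
  have hnodes : ∀ k, eval (x k) (P γ) = 0 :=
    hcub.eval_eq_zero hint hpd horth hdeg hm (Fintype.card_fin _) (fun k => (hw k).ne') hγ
  have hprod : (P γ * P β).totalDegree ≤ 2 * m :=
    (totalDegree_mul _ _).trans (by have := hdeg γ; have := hdeg β; omega)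
  have key := hcub.sum_eq_integral_add hint horth hdeg (by omega) K hK hprod
  simp only [map_mul, hnodes, zero_mul, mul_zero, Finset.sum_const_zero, horth γ β] at key
  exact key.symm

/-- If a Gaussian cubature of degree `2m − 1` exists with node measure
`ν = Σ_k γ_k δ_{x(k)}`, then `u = L_z(𝒫_{2m})`, i.e.
`u_κ = Σ_k γ_k P_κ(x(k))` for `|κ| = 2m`, solves the linear system
`A⁰ + A^{(2m)} u = 0`. -/
theorem stmt_13 (n m : ℕ) (hn : 1 ≤ n) (hm : 1 ≤ m)
    (μ : Measure (Fin n → ℝ)) [IsFiniteMeasure μ]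
    (hint : ∀ f : MvPolynomial (Fin n) ℝ, Integrable (fun x => eval x f) μ)
    (hpd : ∀ f : MvPolynomial (Fin n) ℝ, f ≠ 0 → 0 < ∫ x, (eval x f) ^ 2 ∂μ)
    (P : (Fin n →₀ ℕ) → MvPolynomial (Fin n) ℝ)
    (hspan : ∀ α : Fin n →₀ ℕ, ∀ β ∈ (P α).support, β = α ∨ glt β α)
    (horth : ∀ α β : Fin n →₀ ℕ,
      ∫ x, eval x (P α) * eval x (P β) ∂μ = if α = β then 1 else 0)
    (hlow : ∀ α β : Fin n →₀ ℕ, glt β α →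
      ∫ x, eval x (P α) * ∏ i, x i ^ β i ∂μ = 0)
    (hlead : ∀ α : Fin n →₀ ℕ, 0 < ∫ x, eval x (P α) * ∏ i, x i ^ α i ∂μ)
    (K : Finset (Fin n →₀ ℕ)) (hK : ∀ κ : Fin n →₀ ℕ, κ ∈ K ↔ mdeg κ = 2 * m)
    (x : Fin (Nat.choose (n + m - 1) n) → (Fin n → ℝ))
    (w : Fin (Nat.choose (n + m - 1) n) → ℝ)
    (hx : Function.Injective x) (hw : ∀ k, 0 < w k)
    (hcub : ∀ f : MvPolynomial (Fin n) ℝ, f.totalDegree ≤ 2 * m - 1 →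
      ∑ k, w k * eval (x k) f = ∫ t, eval t f ∂μ) :
    ∀ γ β : Fin n →₀ ℕ, mdeg γ = m → mdeg β = m →
      (if γ = β then (1 : ℝ) else 0)
        + ∑ κ ∈ K, (∫ t, eval t (P γ) * eval t (P β) * eval t (P κ) ∂μ)
            * (∑ k, w k * eval (x k) (P κ)) = 0 :=
  stmt_13_general n m hm μ hint hpd P hspan horth K hK x w hw hcub
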